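/- Yoneda lemma for Hilbert modules over a C*-category: for each object x of A and each right Hilbert A-module F, there is an isometric isomorphism of Banach spaces K(h_x, F) ≅ F(x), where h_x is the representable module and K denotes compact operators. The inverse sends f ∈ F(x) to the operator ε_f with ε_f(a) = f·a for a ∈ h_x(y), whose adjoint is ε_f*(f') = ⟨f, f'⟩. -/

import Mathlib

universe u u' v v'

open Filter Topology

/-- A (possibly non-unital) C*-category structure on a family of hom-spaces:
a category enriched in complex Banach spaces, with contractive composition and a
conjugate-linear involution satisfying the C*-identity and positivity of elements
of the form `a* ∘ a` (encoded via self-adjoint square roots). -/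
class CStarCategory {Obj : Type u} (Hom : Obj → Obj → Type v)
    [∀ x y, NormedAddCommGroup (Hom x y)] [∀ x y, NormedSpace ℂ (Hom x y)]
    [∀ x y, CompleteSpace (Hom x y)] : Type (max u v) where
  comp : ∀ {x y z : Obj}, Hom y z → Hom x y → Hom x z
  adj : ∀ {x y : Obj}, Hom x y → Hom y x
  comp_assoc : ∀ {w x y z : Obj} (f : Hom y z) (g : Hom x y) (h : Hom w x),
      comp (comp f g) h = comp f (comp g h)
  comp_add_left : ∀ {x y z : Obj} (f f' : Hom y z) (g : Hom x y),
      comp (f + f') g = comp f g + comp f' g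
  comp_add_right : ∀ {x y z : Obj} (f : Hom y z) (g g' : Hom x y),
      comp f (g + g') = comp f g + comp f g'
  comp_smul_left : ∀ {x y z : Obj} (c : ℂ) (f : Hom y z) (g : Hom x y),
      comp (c • f) g = c • comp f g
  comp_smul_right : ∀ {x y z : Obj} (c : ℂ) (f : Hom y z) (g : Hom x y),
      comp f (c • g) = c • comp f g
  norm_comp_le : ∀ {x y z : Obj} (f : Hom y z) (g : Hom x y), ‖comp f g‖ ≤ ‖f‖ * ‖g‖
  adj_adj : ∀ {x y : Obj} (f : Hom x y), adj (adj f) = f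
  adj_add : ∀ {x y : Obj} (f g : Hom x y), adj (f + g) = adj f + adj g
  adj_smul : ∀ {x y : Obj} (c : ℂ) (f : Hom x y), adj (c • f) = (starRingEnd ℂ) c • adj f
  adj_comp : ∀ {x y z : Obj} (f : Hom y z) (g : Hom x y), adj (comp f g) = comp (adj g) (adj f)
  norm_adj_comp_self : ∀ {x y : Obj} (a : Hom x y), ‖comp (adj a) a‖ = ‖a‖ * ‖a‖
  pos_adj_comp_self : ∀ {x y : Obj} (a : Hom x y),
      ∃ b : Hom x x, adj b = b ∧ comp (adj a) a = comp b b

infixl:70 " ⊛ " => CStarCategory.comp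
postfix:max "†" => CStarCategory.adj

section CStarBasics

variable {Obj : Type u} {Hom : Obj → Obj → Type v}
  [∀ x y, NormedAddCommGroup (Hom x y)] [∀ x y, NormedSpace ℂ (Hom x y)]
  [∀ x y, CompleteSpace (Hom x y)] [CStarCategory Hom]

/-- Positivity of an endomorphism in a C*-category: it is of the form `b* ∘ b`. -/
def IsPos {x : Obj} (s : Hom x x) : Prop :=
  ∃ (z : Obj) (b : Hom x z), s = (b†) ⊛ b

/-- An approximate unit for the C*-algebra `Hom x x`: a directed net of positive,
norm-bounded, increasing elements with `‖e_i ∘ c - c‖ → 0` for every `c`. -/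
structure IsApproxUnit {ι : Type u'} [Preorder ι] {x : Obj} (e : ι → Hom x x) : Prop where
  nonempty : Nonempty ι
  directed : ∀ i j : ι, ∃ k, i ≤ k ∧ j ≤ k
  norm_le_one : ∀ i, ‖e i‖ ≤ 1
  pos : ∀ i, IsPos (e i)
  mono : ∀ i j, i ≤ j → IsPos (e j - e i)
  tendsto : ∀ c : Hom x x, Tendsto (fun i => ‖(e i ⊛ c) - c‖) atTop (nhds 0)

end CStarBasics

/-- Unitality, as a property of a C*-category. -/
def IsUnitalCStarCat {Obj : Type u} (Hom : Obj → Obj → Type v)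
    [∀ x y, NormedAddCommGroup (Hom x y)] [∀ x y, NormedSpace ℂ (Hom x y)]
    [∀ x y, CompleteSpace (Hom x y)] [CStarCategory Hom] : Prop :=
  ∀ x : Obj, ∃ e : Hom x x,
    (∀ {y : Obj} (a : Hom y x), e ⊛ a = a) ∧ (∀ {y : Obj} (b : Hom x y), b ⊛ e = b)

/-- A right Hilbert module over a C*-category: a ℂ-linear functor into vector spaces
equipped with `Hom`-valued inner products; each fiber is a Banach space whose norm is
induced by the inner product. -/
structure HilbMod {Obj : Type u} (Hom : Obj → Obj → Type v)
    [∀ x y, NormedAddCommGroup (Hom x y)] [∀ x y, NormedSpace ℂ (Hom x y)]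
    [∀ x y, CompleteSpace (Hom x y)] [CStarCategory Hom] : Type (max u (v + 1)) where
  carrier : Obj → Type v
  [nacg : ∀ x, NormedAddCommGroup (carrier x)]
  [nsp : ∀ x, NormedSpace ℂ (carrier x)]
  [cs : ∀ x, CompleteSpace (carrier x)]
  smulA : ∀ {x w : Obj}, carrier x → Hom w x → carrier w
  inner : ∀ {y z : Obj}, carrier z → carrier y → Hom y z
  smulA_add_left : ∀ {x w : Obj} (e e' : carrier x) (a : Hom w x),
      smulA (e + e') a = smulA e a + smulA e' a
  smulA_add_right : ∀ {x w : Obj} (e : carrier x) (a a' : Hom w x),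
      smulA e (a + a') = smulA e a + smulA e a'
  smulA_smul_left : ∀ {x w : Obj} (c : ℂ) (e : carrier x) (a : Hom w x),
      smulA (c • e) a = c • smulA e a
  smulA_smul_right : ∀ {x w : Obj} (c : ℂ) (e : carrier x) (a : Hom w x),
      smulA e (c • a) = c • smulA e a
  smulA_comp : ∀ {x w v : Obj} (e : carrier x) (a : Hom w x) (b : Hom v w),
      smulA (smulA e a) b = smulA e (a ⊛ b)
  inner_add_left : ∀ {y z : Obj} (e e' : carrier z) (f : carrier y),
      inner (e + e') f = inner e f + inner e' f
  inner_add_right : ∀ {y z : Obj} (e : carrier z) (f f' : carrier y),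
      inner e (f + f') = inner e f + inner e f'
  inner_smul_right : ∀ {y z : Obj} (c : ℂ) (e : carrier z) (f : carrier y),
      inner e (c • f) = c • inner e f
  adj_inner : ∀ {y z : Obj} (e : carrier z) (f : carrier y), (inner e f)† = inner f e
  inner_smulA : ∀ {y z w : Obj} (e : carrier z) (f : carrier y) (a : Hom w y),
      inner e (smulA f a) = inner e f ⊛ a
  inner_self_pos : ∀ {x : Obj} (e : carrier x), ∃ (z : Obj) (b : Hom x z),
      inner e e = (b†) ⊛ b
  inner_self_eq_zero : ∀ {x : Obj} (e : carrier x), inner e e = 0 → e = 0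
  norm_eq : ∀ {x : Obj} (e : carrier x), ‖e‖ = Real.sqrt ‖inner e e‖

attribute [instance] HilbMod.nacg HilbMod.nsp HilbMod.cs

section HilbModBasics

variable {Obj : Type u} {Hom : Obj → Obj → Type v}
  [∀ x y, NormedAddCommGroup (Hom x y)] [∀ x y, NormedSpace ℂ (Hom x y)]
  [∀ x y, CompleteSpace (Hom x y)] [CStarCategory Hom]

theorem HilbMod.inner_zero_left (M : HilbMod Hom) {y z : Obj} (f : M.carrier y) :
    M.inner (0 : M.carrier z) f = 0 := by
  have h := M.inner_add_left (0 : M.carrier z) 0 f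
  rw [add_zero] at h
  exact left_eq_add.mp h

theorem HilbMod.inner_zero_right (M : HilbMod Hom) {y z : Obj} (e : M.carrier z) :
    M.inner e (0 : M.carrier y) = 0 := by
  have h := M.inner_add_right e (0 : M.carrier y) 0
  rw [add_zero] at h
  exact left_eq_add.mp h

theorem HilbMod.inner_smul_left (M : HilbMod Hom) {y z : Obj} (c : ℂ)
    (e : M.carrier z) (f : M.carrier y) :
    M.inner (c • e) f = (starRingEnd ℂ) c • M.inner e f := by
  have h : M.inner (c • e) f = (M.inner f (c • e))† := (M.adj_inner f (c • e)).symm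
  rw [h, M.inner_smul_right, CStarCategory.adj_smul, M.adj_inner]

theorem HilbMod.inner_smulA_left (M : HilbMod Hom) {x y w : Obj}
    (f : M.carrier x) (a : Hom w x) (g : M.carrier y) :
    M.inner (M.smulA f a) g = (a†) ⊛ M.inner f g := by
  have h : M.inner (M.smulA f a) g = (M.inner g (M.smulA f a))† :=
    (M.adj_inner g (M.smulA f a)).symm
  rw [h, M.inner_smulA, CStarCategory.adj_comp, M.adj_inner]

/-- A bounded adjointable operator between Hilbert modules over a C*-category,
encoded by a pair of adjoint maps. -/
structure HilbOp (M N : HilbMod Hom) : Type (max u v) where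
  toFun : ∀ x, M.carrier x → N.carrier x
  adjFun : ∀ x, N.carrier x → M.carrier x
  adjoint_prop : ∀ {y z : Obj} (e : M.carrier z) (f : N.carrier y),
      N.inner (toFun z e) f = M.inner e (adjFun y f)

variable {M N P : HilbMod Hom}

theorem HilbOp.ext' {T S : HilbOp M N} (h1 : ∀ z v, T.toFun z v = S.toFun z v)
    (h2 : ∀ z w, T.adjFun z w = S.adjFun z w) : T = S := by
  cases T with
  | mk tf af ap =>
    cases S with
    | mk tf' af' ap' =>
      have e1 : tf = tf' := funext fun z => funext fun v => h1 z v
      subst e1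
      have e2 : af = af' := funext fun z => funext fun w => h2 z w
      subst e2
      rfl

/-- Composition of operators. -/
def HilbOp.comp (S : HilbOp N P) (T : HilbOp M N) : HilbOp M P where
  toFun z v := S.toFun z (T.toFun z v)
  adjFun z w := T.adjFun z (S.adjFun z w)
  adjoint_prop e f := by rw [S.adjoint_prop, T.adjoint_prop]

/-- The identity operator. -/
def HilbOp.id (M : HilbMod Hom) : HilbOp M M where
  toFun _ v := v
  adjFun _ v := v
  adjoint_prop _ _ := rfl

/-- Adjoint (involution) of an operator. -/
def HilbOp.star (T : HilbOp M N) : HilbOp N M where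
  toFun := T.adjFun
  adjFun := T.toFun
  adjoint_prop e f := by
    have h := congrArg CStarCategory.adj (T.adjoint_prop f e)
    rw [N.adj_inner, M.adj_inner] at h
    exact h.symm

instance : Zero (HilbOp M N) :=
  ⟨{ toFun := fun _ _ => 0
     adjFun := fun _ _ => 0
     adjoint_prop := fun e f => by
       rw [HilbMod.inner_zero_left, HilbMod.inner_zero_right] }⟩

instance : Add (HilbOp M N) :=
  ⟨fun T S =>
    { toFun := fun z v => T.toFun z v + S.toFun z v
      adjFun := fun z w => T.adjFun z w + S.adjFun z w
      adjoint_prop := fun e f => by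
        rw [N.inner_add_left, M.inner_add_right, T.adjoint_prop, S.adjoint_prop] }⟩

instance : SMul ℂ (HilbOp M N) :=
  ⟨fun c T =>
    { toFun := fun z v => c • T.toFun z v
      adjFun := fun z w => (starRingEnd ℂ) c • T.adjFun z w
      adjoint_prop := fun e f => by
        rw [HilbMod.inner_smul_left, M.inner_smul_right, T.adjoint_prop] }⟩

instance : AddCommMonoid (HilbOp M N) where
  add_assoc T S R := HilbOp.ext' (fun z v => add_assoc _ _ _) (fun z w => add_assoc _ _ _)
  zero_add T := HilbOp.ext' (fun z v => zero_add _) (fun z w => zero_add _)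
  add_zero T := HilbOp.ext' (fun z v => add_zero _) (fun z w => add_zero _)
  add_comm T S := HilbOp.ext' (fun z v => add_comm _ _) (fun z w => add_comm _ _)
  nsmul := nsmulRec

/-- The operator norm of an operator between Hilbert modules. -/
noncomputable def opNorm (T : HilbOp M N) : ℝ :=
  sInf {C : ℝ | 0 ≤ C ∧ ∀ (z : Obj) (v : M.carrier z), ‖T.toFun z v‖ ≤ C * ‖v‖}

/-- The rank-one operator `θ^{f,e} : v ↦ f·⟨e,v⟩`. -/
def thetaOp {x : Obj} (f : N.carrier x) (e : M.carrier x) : HilbOp M N where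
  toFun z v := N.smulA f (M.inner e v)
  adjFun z w := M.smulA e (N.inner f w)
  adjoint_prop v w := by
    rw [HilbMod.inner_smulA_left, M.adj_inner, M.inner_smulA]

/-- Compact operators: norm-limits of finite sums of rank-one operators. -/
def IsCompactOp (T : HilbOp M N) : Prop :=
  ∀ ε : ℝ, 0 < ε → ∃ (n : ℕ) (w : Fin n → Obj) (f : ∀ i, N.carrier (w i))
    (e : ∀ i, M.carrier (w i)), ∀ (z : Obj) (v : M.carrier z),
      ‖T.toFun z v - ∑ i, N.smulA (f i) (M.inner (e i) v)‖ ≤ ε * ‖v‖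

end HilbModBasics

/-- The representable right Hilbert module `h_x = Hom(-, x)`. -/
def repMod {Obj : Type u} (Hom : Obj → Obj → Type v)
    [∀ x y, NormedAddCommGroup (Hom x y)] [∀ x y, NormedSpace ℂ (Hom x y)]
    [∀ x y, CompleteSpace (Hom x y)] [CStarCategory Hom] (x : Obj) : HilbMod Hom where
  carrier z := Hom z x
  smulA e a := e ⊛ a
  inner e f := (e†) ⊛ f
  smulA_add_left e e' a := CStarCategory.comp_add_left e e' a
  smulA_add_right e a a' := CStarCategory.comp_add_right e a a'
  smulA_smul_left c e a := CStarCategory.comp_smul_left c e a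
  smulA_smul_right c e a := CStarCategory.comp_smul_right c e a
  smulA_comp e a b := CStarCategory.comp_assoc e a b
  inner_add_left e e' f := by
    show ((e + e')†) ⊛ f = ((e†) ⊛ f) + ((e'†) ⊛ f)
    rw [CStarCategory.adj_add, CStarCategory.comp_add_left]
  inner_add_right e f f' := CStarCategory.comp_add_right _ f f'
  inner_smul_right c e f := CStarCategory.comp_smul_right c _ f
  adj_inner e f := by rw [CStarCategory.adj_comp, CStarCategory.adj_adj]
  inner_smulA e f a := (CStarCategory.comp_assoc _ f a).symm
  inner_self_pos e := ⟨x, e, rfl⟩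
  inner_self_eq_zero := by
    intro z e h
    have h' : (e†) ⊛ e = 0 := h
    have h2 := CStarCategory.norm_adj_comp_self (Hom := Hom) e
    rw [h', norm_zero] at h2
    have h3 : ‖e‖ = 0 := by nlinarith [norm_nonneg e]
    exact norm_eq_zero.mp h3
  norm_eq := by
    intro z e
    rw [CStarCategory.norm_adj_comp_self, Real.sqrt_mul_self (norm_nonneg e)]

section YonedaOps

variable {Obj : Type u} {Hom : Obj → Obj → Type v}
  [∀ x y, NormedAddCommGroup (Hom x y)] [∀ x y, NormedSpace ℂ (Hom x y)]
  [∀ x y, CompleteSpace (Hom x y)] [CStarCategory Hom]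

/-- The operator `ε_m : h_x → M` sending `a` to `m·a`; its adjoint is `f ↦ ⟨m,f⟩`. -/
def epsOp {M : HilbMod Hom} {x : Obj} (m : M.carrier x) : HilbOp (repMod Hom x) M where
  toFun z a := M.smulA m a
  adjFun z f := M.inner m f
  adjoint_prop a f := HilbMod.inner_smulA_left M m a f

/-- The Yoneda operator `h_x → h_y` given by postcomposition with `a : Hom x y`. -/
def yonedaOp {x y : Obj} (a : Hom x y) : HilbOp (repMod Hom x) (repMod Hom y) where
  toFun z b := a ⊛ b
  adjFun z c := (a†) ⊛ c
  adjoint_prop b c := by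
    change Hom _ x at b
    change Hom _ y at c
    show ((a ⊛ b)†) ⊛ c = (b†) ⊛ ((a†) ⊛ c)
    rw [CStarCategory.adj_comp, CStarCategory.comp_assoc]

end YonedaOps

/-!
Write `⟨f, f⟩ = c c` with `c` self-adjoint in the C*-algebra `Hom x x`. Then `‖f·a‖ = ‖c a‖`
for every `a`, so `‖f·a‖ ≤ ‖f‖ ‖a‖` with equality at `a = c`: `f ↦ ε_f` is isometric. Along an
approximate unit `u` of `Hom x x` we have `c u → c`, so `ε_f` is the norm-limit of the rank-one
operators `θ^{f, u*}`. Conversely, on `h_x` a finite sum `∑ θ^{f_i, e_i}` equals `ε_g` for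
`g = ∑ f_i·e_i*`, so a compact `T` is a norm-limit of operators `ε_{g_n}`; by isometry `(g_n)` is
Cauchy, its limit `f` has `T = ε_f` on the underlying maps, and the adjoint of an operator is
determined by the operator.
-/

theorem exists_norm_sub_mul_lt {A : Type*} [NonUnitalCStarAlgebra A] (c : A) {ε : ℝ}
    (hε : 0 < ε) : ∃ u : A, ‖c - c * u‖ < ε := by
  let _ := CStarAlgebra.spectralOrder A
  have _ := CStarAlgebra.spectralOrderedRing A
  have hl := CStarAlgebra.increasingApproximateUnit A
  have _ := hl.neBot
  obtain ⟨u, hu⟩ := (hl.tendsto_mul_left c |>.eventually (Metric.ball_mem_nhds c hε)).exists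
  exact ⟨u, by rwa [← dist_eq_norm, dist_comm]⟩

namespace CStarCategory

variable {Obj : Type u} {Hom : Obj → Obj → Type v}
  [∀ x y, NormedAddCommGroup (Hom x y)] [∀ x y, NormedSpace ℂ (Hom x y)]
  [∀ x y, CompleteSpace (Hom x y)] [CStarCategory Hom]

theorem comp_sub_left {x y z : Obj} (f f' : Hom y z) (g : Hom x y) :
    (f - f') ⊛ g = f ⊛ g - f' ⊛ g :=
  eq_sub_of_add_eq (by rw [← comp_add_left, sub_add_cancel])

theorem comp_sub_right {x y z : Obj} (f : Hom y z) (g g' : Hom x y) :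
    f ⊛ (g - g') = f ⊛ g - f ⊛ g' :=
  eq_sub_of_add_eq (by rw [← comp_add_right, sub_add_cancel])

theorem zero_comp {x y z : Obj} (g : Hom x y) : (0 : Hom y z) ⊛ g = 0 := by
  simpa using comp_sub_left (0 : Hom y z) 0 g

theorem comp_zero {x y z : Obj} (f : Hom y z) : f ⊛ (0 : Hom x y) = 0 := by
  simpa using comp_sub_right f (0 : Hom x y) 0

noncomputable instance endNonUnitalNormedRing (x : Obj) : NonUnitalNormedRing (Hom x x) :=
  { (inferInstance : NormedAddCommGroup (Hom x x)) with
    mul := comp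
    left_distrib := comp_add_right
    right_distrib := comp_add_left
    zero_mul := zero_comp
    mul_zero := comp_zero
    mul_assoc := comp_assoc
    norm_mul_le := norm_comp_le }

instance endStarRing (x : Obj) : StarRing (Hom x x) where
  star := adj
  star_involutive := adj_adj
  star_mul := adj_comp
  star_add := adj_add

noncomputable instance endNonUnitalCStarAlgebra (x : Obj) : NonUnitalCStarAlgebra (Hom x x) :=
  { endNonUnitalNormedRing x, endStarRing x, (inferInstance : NormedSpace ℂ (Hom x x)),
    (inferInstance : CompleteSpace (Hom x x)) with
    norm_mul_self_le := fun a => (norm_adj_comp_self a).ge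
    smul_assoc := comp_smul_left
    smul_comm := fun c a b => (comp_smul_right c a b).symm
    star_smul := adj_smul }

end CStarCategory

namespace HilbMod

open CStarCategory

variable {Obj : Type u} {Hom : Obj → Obj → Type v}
  [∀ x y, NormedAddCommGroup (Hom x y)] [∀ x y, NormedSpace ℂ (Hom x y)]
  [∀ x y, CompleteSpace (Hom x y)] [CStarCategory Hom] (F : HilbMod Hom)

theorem inner_sub_right {y z : Obj} (e : F.carrier z) (f f' : F.carrier y) :
    F.inner e (f - f') = F.inner e f - F.inner e f' :=
  eq_sub_of_add_eq (by rw [← F.inner_add_right, sub_add_cancel])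

theorem smulA_sub_right {x w : Obj} (e : F.carrier x) (a a' : Hom w x) :
    F.smulA e (a - a') = F.smulA e a - F.smulA e a' :=
  eq_sub_of_add_eq (by rw [← F.smulA_add_right, sub_add_cancel])

theorem norm_eq_of_inner_self_eq_adj_comp {y z : Obj} {k : F.carrier z} {b : Hom z y}
    (hk : F.inner k k = b† ⊛ b) : ‖k‖ = ‖b‖ := by
  rw [F.norm_eq, hk, norm_adj_comp_self, Real.sqrt_mul_self (norm_nonneg b)]

theorem exists_inner_self_eq_comp_self {x : Obj} (h : F.carrier x) :
    ∃ c : Hom x x, c† = c ∧ F.inner h h = c ⊛ c := by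
  obtain ⟨_, b, hb⟩ := F.inner_self_pos h
  obtain ⟨c, hc, hbc⟩ := pos_adj_comp_self b
  exact ⟨c, hc, hb.trans hbc⟩

variable {F}

theorem norm_smulA_eq_norm_comp {x z : Obj} {h : F.carrier x} {c : Hom x x} (hc : c† = c)
    (hh : F.inner h h = c ⊛ c) (a : Hom z x) : ‖F.smulA h a‖ = ‖c ⊛ a‖ := by
  apply F.norm_eq_of_inner_self_eq_adj_comp
  rw [F.inner_smulA_left, F.inner_smulA, hh, adj_comp, hc, comp_assoc, comp_assoc]

theorem norm_eq_of_inner_self_eq_comp {x : Obj} {h : F.carrier x} {c : Hom x x} (hc : c† = c)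
    (hh : F.inner h h = c ⊛ c) : ‖h‖ = ‖c‖ :=
  F.norm_eq_of_inner_self_eq_adj_comp (by rw [hh, hc])

variable (F)

theorem norm_smulA_le {x z : Obj} (h : F.carrier x) (a : Hom z x) :
    ‖F.smulA h a‖ ≤ ‖h‖ * ‖a‖ := by
  obtain ⟨c, hc, hh⟩ := F.exists_inner_self_eq_comp_self h
  rw [norm_smulA_eq_norm_comp hc hh, norm_eq_of_inner_self_eq_comp hc hh]
  exact norm_comp_le c a

theorem norm_le_of_forall_norm_smulA_le {x : Obj} (h : F.carrier x) {C : ℝ} (hC : 0 ≤ C)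
    (hb : ∀ a : Hom x x, ‖F.smulA h a‖ ≤ C * ‖a‖) : ‖h‖ ≤ C := by
  obtain ⟨c, hc, hh⟩ := F.exists_inner_self_eq_comp_self h
  have hhc := norm_eq_of_inner_self_eq_comp hc hh
  rcases (norm_nonneg c).eq_or_lt with hc0 | hc0
  · rw [hhc, ← hc0]
    exact hC
  · have hmul : ‖h‖ * ‖c‖ ≤ C * ‖c‖ := by
      calc ‖h‖ * ‖c‖ = ‖c ⊛ c‖ := by rw [hhc, ← norm_adj_comp_self, hc]
        _ = ‖F.smulA h c‖ := (norm_smulA_eq_norm_comp hc hh c).symm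
        _ ≤ C * ‖c‖ := hb c
    exact le_of_mul_le_mul_right hmul hc0

noncomputable def smulARight {x z : Obj} (a : Hom z x) : F.carrier x →L[ℂ] F.carrier z :=
  LinearMap.mkContinuous
    { toFun := fun h => F.smulA h a
      map_add' := fun h h' => F.smulA_add_left h h' a
      map_smul' := fun c h => F.smulA_smul_left c h a }
    ‖a‖ (fun h => (F.norm_smulA_le h a).trans_eq (mul_comm _ _))

@[simp]
theorem smulARight_apply {x z : Obj} (a : Hom z x) (h : F.carrier x) :
    F.smulARight a h = F.smulA h a := rfl

theorem exists_eq_smulA_of_forall_approx {x : Obj} (Φ : ∀ z, Hom z x → F.carrier z)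
    (hΦ : ∀ ε > 0, ∃ g : F.carrier x, ∀ z (a : Hom z x), ‖Φ z a - F.smulA g a‖ ≤ ε * ‖a‖) :
    ∃ f : F.carrier x, ∀ z (a : Hom z x), Φ z a = F.smulA f a := by
  choose g hg using fun n : ℕ => hΦ (1 / (n + 1)) Nat.one_div_pos_of_nat
  have hdist : ∀ n m, dist (g n) (g m) ≤ 1 / (n + 1) + 1 / (m + 1) := fun n m => by
    refine dist_eq_norm (g n) (g m) ▸ F.norm_le_of_forall_norm_smulA_le _ (by positivity)
      fun a => ?_
    calc ‖F.smulA (g n - g m) a‖ = ‖(Φ x a - F.smulA (g m) a) - (Φ x a - F.smulA (g n) a)‖ := by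
          rw [sub_sub_sub_cancel_left, ← smulARight_apply, map_sub]; rfl
      _ ≤ 1 / (m + 1) * ‖a‖ + 1 / (n + 1) * ‖a‖ := (norm_sub_le _ _).trans
          (add_le_add (hg m x a) (hg n x a))
      _ = (1 / (n + 1) + 1 / (m + 1)) * ‖a‖ := by ring
  have hcauchy : CauchySeq g := by
    refine cauchySeq_of_le_tendsto_0 (fun N : ℕ => 2 * (1 / ((N : ℝ) + 1)))
      (fun n m N hn hm => (hdist n m).trans ?_) ?_
    · have hn' : 1 / ((n : ℝ) + 1) ≤ 1 / (N + 1) := Nat.one_div_le_one_div hn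
      have hm' : 1 / ((m : ℝ) + 1) ≤ 1 / (N + 1) := Nat.one_div_le_one_div hm
      linarith
    · simpa using tendsto_one_div_add_atTop_nhds_zero_nat.const_mul (2 : ℝ)
  obtain ⟨f, hf⟩ := cauchySeq_tendsto_of_complete hcauchy
  refine ⟨f, fun z a => tendsto_nhds_unique ?_ (((F.smulARight a).continuous.tendsto f).comp hf)⟩
  rw [tendsto_iff_norm_sub_tendsto_zero]
  refine squeeze_zero (fun _ => norm_nonneg _) (fun n => (norm_sub_rev _ _).trans_le (hg n z a)) ?_
  simpa using tendsto_one_div_add_atTop_nhds_zero_nat.mul_const ‖a‖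

end HilbMod

namespace HilbOp

variable {Obj : Type u} {Hom : Obj → Obj → Type v}
  [∀ x y, NormedAddCommGroup (Hom x y)] [∀ x y, NormedSpace ℂ (Hom x y)]
  [∀ x y, CompleteSpace (Hom x y)] [CStarCategory Hom] {M N : HilbMod Hom}

theorem ext_toFun {T S : HilbOp M N} (h : ∀ z v, T.toFun z v = S.toFun z v) : T = S := by
  refine HilbOp.ext' h fun z w => sub_eq_zero.mp (M.inner_self_eq_zero _ ?_)
  rw [M.inner_sub_right, ← T.adjoint_prop, ← S.adjoint_prop, h, sub_self]

end HilbOp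

section Yoneda

open CStarCategory HilbMod

variable {Obj : Type u} {Hom : Obj → Obj → Type v}
  [∀ x y, NormedAddCommGroup (Hom x y)] [∀ x y, NormedSpace ℂ (Hom x y)]
  [∀ x y, CompleteSpace (Hom x y)] [CStarCategory Hom] {F : HilbMod Hom} {x : Obj}

theorem epsOp_isCompactOp (f : F.carrier x) : IsCompactOp (epsOp (M := F) f) := by
  intro ε hε
  obtain ⟨c, hc, hf⟩ := F.exists_inner_self_eq_comp_self f
  obtain ⟨u, hu⟩ := exists_norm_sub_mul_lt c hε
  refine ⟨1, fun _ => x, fun _ => f, fun _ => u†, fun z a => ?_⟩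
  change Hom z x at a
  calc _ = ‖F.smulA f (a - u ⊛ a)‖ := by
        rw [Fin.sum_univ_one, F.smulA_sub_right]
        change ‖F.smulA f a - F.smulA f (u†† ⊛ a)‖ = _
        rw [adj_adj]
    _ = ‖(c - c ⊛ u) ⊛ a‖ := by
        rw [norm_smulA_eq_norm_comp hc hf, comp_sub_right, comp_sub_left, comp_assoc]
    _ ≤ ‖c - c ⊛ u‖ * ‖a‖ := norm_comp_le _ _
    _ ≤ ε * ‖a‖ := by gcongr; exact hu.le

theorem opNorm_epsOp (f : F.carrier x) : opNorm (epsOp (M := F) f) = ‖f‖ :=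
  IsLeast.csInf_eq ⟨⟨norm_nonneg f, fun _ a => F.norm_smulA_le f a⟩,
    fun _ hC => F.norm_le_of_forall_norm_smulA_le f hC.1 (hC.2 x)⟩

theorem epsOp_injective : Function.Injective (fun f : F.carrier x => epsOp (M := F) f) := by
  intro f g hfg
  have hsmul (a : Hom x x) : F.smulA f a = F.smulA g a :=
    congrFun (congrFun (congrArg HilbOp.toFun hfg) x) a
  rw [← sub_eq_zero, ← norm_le_zero_iff]
  refine F.norm_le_of_forall_norm_smulA_le _ le_rfl fun a => ?_
  rw [← smulARight_apply, map_sub, smulARight_apply, smulARight_apply, hsmul, sub_self,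
    norm_zero, zero_mul]

theorem sum_smulA_inner_repMod {ι : Type*} (s : Finset ι) {w : ι → Obj}
    (f : ∀ i, F.carrier (w i)) (e : ∀ i, Hom (w i) x) {z : Obj} (a : Hom z x) :
    ∑ i ∈ s, F.smulA (f i) ((repMod Hom x).inner (e i) a) =
      F.smulA (∑ i ∈ s, F.smulA (f i) (e i)†) a := by
  rw [← smulARight_apply, map_sum]
  exact Finset.sum_congr rfl fun i _ => (F.smulA_comp _ _ _).symm

theorem exists_eq_epsOp_of_isCompactOp (T : HilbOp (repMod Hom x) F) (hT : IsCompactOp T) :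
    ∃ f : F.carrier x, T = epsOp f := by
  obtain ⟨f, hf⟩ := F.exists_eq_smulA_of_forall_approx T.toFun fun ε hε => by
    obtain ⟨n, w, g, e, hge⟩ := hT ε hε
    exact ⟨∑ i, F.smulA (g i) (e i)†, fun z a => sum_smulA_inner_repMod _ g e a ▸ hge z a⟩
  exact ⟨f, HilbOp.ext_toFun hf⟩

end Yoneda

/-- (Yoneda lemma for Hilbert modules over a C*-category.)  For
each object `x` of `A` and each right Hilbert `A`-module `F`, the assignment
`f ↦ ε_f` (where `ε_f(a) = f·a`, with adjoint `ε_f*(f') = ⟨f,f'⟩`) is an isometric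
isomorphism `F(x) ≅ K(h_x, F)` onto the compact operators from the representable
module `h_x` to `F`. -/
theorem hilbmod_yoneda {Obj : Type u} {Hom : Obj → Obj → Type v}
    [∀ x y, NormedAddCommGroup (Hom x y)] [∀ x y, NormedSpace ℂ (Hom x y)]
    [∀ x y, CompleteSpace (Hom x y)] [CStarCategory Hom]
    (F : HilbMod Hom) (x : Obj) :
    (∀ f : F.carrier x,
      IsCompactOp (epsOp (M := F) f) ∧
      opNorm (epsOp (M := F) f) = ‖f‖ ∧
      (∀ (y : Obj) (a : Hom y x), (epsOp (M := F) f).toFun y a = F.smulA f a) ∧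
      (∀ (y : Obj) (f' : F.carrier y), (epsOp (M := F) f).adjFun y f' = F.inner f f')) ∧
    Function.Injective (fun f : F.carrier x => epsOp (M := F) f) ∧
    (∀ T : HilbOp (repMod Hom x) F, IsCompactOp T → ∃ f : F.carrier x, T = epsOp f) :=
  ⟨fun f => ⟨epsOp_isCompactOp f, opNorm_epsOp f, fun _ _ => rfl, fun _ _ => rfl⟩,
    epsOp_injective, exists_eq_epsOp_of_isCompactOp⟩
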